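/- arXiv:2602.22509 — 4 statements merged into one kernel-verified Lean document; each statement's English description precedes it below -/
import Mathlib

section
/- Let d ≥ 1, α ≥ 0, ε ∈ (0,1), and let N_ε = log₂(1/ε). For every K ≤ N_ε: if α > 0 then ∑_{n=K}^∞ (2^{-n} + ε)^{α-d} · 2^{-d n} ≤ (2/(1 - 2^{-min(α,d)})) · (2^{-K} + ε)^α; and if α = 0 then ∑_{n=K}^∞ (2^{-n} + ε)^{-d} · 2^{-d n} ≤ (1/(1 - 2^{-d})) · (N_ε - K + 1). -/
lemma aux_rpow_convex {x θ : ℝ} (hx : 1 ≤ x) (h0 : 0 ≤ θ) (h1 : θ ≤ 1) :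
    x ^ θ ≤ 1 + (x - 1) * θ := by
  have hx0 : (0:ℝ) < x := lt_of_lt_of_le one_pos hx
  have h := convexOn_exp.2 (Set.mem_univ (0:ℝ)) (Set.mem_univ (Real.log x))
    (by linarith : (0:ℝ) ≤ 1 - θ) h0 (by ring)
  simp only [smul_eq_mul, Real.exp_zero, Real.exp_log hx0] at h
  rw [Real.rpow_def_of_pos hx0]
  calc Real.exp (Real.log x * θ) = Real.exp ((1-θ)*0 + θ*Real.log x) := by ring_nf
    _ ≤ (1-θ)*1 + θ*x := h
    _ = 1 + (x-1)*θ := by ring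

lemma aux_part2 (d : ℕ) (hd : 1 ≤ d) (ε : ℝ) (hε : ε ∈ Set.Ioo (0:ℝ) 1)
    (K : ℕ) (hK : (K : ℝ) ≤ Real.logb 2 (1 / ε)) :
    ∑' n : ℕ, ((2:ℝ) ^ (-(((K + n : ℕ)) : ℝ)) + ε) ^ (-(d:ℝ)) *
        (2:ℝ) ^ (-(d:ℝ) * (((K + n : ℕ)) : ℝ))
      ≤ (1 / (1 - (2:ℝ) ^ (-(d:ℝ)))) * (Real.logb 2 (1 / ε) - K + 1) := by
  obtain ⟨hε0, hε1⟩ := hε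
  have h2 : (1:ℝ) < 2 := one_lt_two
  have hdpos : (0:ℝ) < d := by exact_mod_cast hd
  have hd1 : (1:ℝ) ≤ d := by exact_mod_cast hd
  set t : ℝ := Real.logb 2 (1 / ε) with ht_def
  have htε : (2:ℝ) ^ (-t) = ε := by
    rw [ht_def, one_div, Real.logb_inv, neg_neg]
    exact Real.rpow_logb two_pos (by norm_num) hε0
  have ht0 : 0 ≤ t := le_trans (Nat.cast_nonneg K) hK
  set s : ℝ := (2:ℝ) ^ (-(d:ℝ)) with hs_def
  have hs0 : 0 < s := Real.rpow_pos_of_pos two_pos _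
  have hs1 : s < 1 := Real.rpow_lt_one_of_one_lt_of_neg h2 (by linarith)
  have hshalf : s ≤ 1/2 := by
    rw [hs_def]
    calc (2:ℝ) ^ (-(d:ℝ)) ≤ (2:ℝ) ^ (-(1:ℝ)) :=
          Real.rpow_le_rpow_of_exponent_le h2.le (by linarith)
      _ = 1/2 := by rw [Real.rpow_neg_one]; norm_num
  set c : ℝ := (1 - s)⁻¹ with hc_def
  have h1s : 0 < 1 - s := by linarith
  set m : ℕ := ⌊t⌋₊ with hm_def
  have hKm : K ≤ m := Nat.le_floor hK
  have hmt : (m:ℝ) ≤ t := Nat.floor_le ht0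
  have htm1 : t < (m:ℝ) + 1 := Nat.lt_floor_add_one t
  set M : ℕ := m + 1 - K with hM_def
  have hKM : K + M = m + 1 := by omega
  set f : ℕ → ℝ := fun n => ((2:ℝ) ^ (-(((K + n : ℕ)) : ℝ)) + ε) ^ (-(d:ℝ)) *
      (2:ℝ) ^ (-(d:ℝ) * (((K + n : ℕ)) : ℝ)) with hf_def
  have hbpos : ∀ n : ℕ, (0:ℝ) < (2:ℝ) ^ (-(((K + n : ℕ)) : ℝ)) + ε :=
    fun n => add_pos (Real.rpow_pos_of_pos two_pos _) hε0
  have hfnonneg : ∀ n, 0 ≤ f n := fun n =>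
    mul_nonneg (Real.rpow_nonneg (hbpos n).le _) (Real.rpow_nonneg (by norm_num) _)
  -- bound f n ≤ 1
  have hfle1 : ∀ n, f n ≤ 1 := by
    intro n
    have e1 : (2:ℝ) ^ (-(d:ℝ) * (((K + n : ℕ)) : ℝ)) =
        ((2:ℝ) ^ (-(((K + n : ℕ)) : ℝ))) ^ (d:ℝ) := by
      rw [← Real.rpow_mul (by norm_num)]; ring_nf
    have e2 : ((2:ℝ) ^ (-(((K + n : ℕ)) : ℝ))) ^ (d:ℝ) ≤
        ((2:ℝ) ^ (-(((K + n : ℕ)) : ℝ)) + ε) ^ (d:ℝ) :=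
      Real.rpow_le_rpow (Real.rpow_nonneg (by norm_num) _)
        (le_add_of_nonneg_right hε0.le) hdpos.le
    have e3 : ((2:ℝ) ^ (-(((K + n : ℕ)) : ℝ)) + ε) ^ (-(d:ℝ)) *
        ((2:ℝ) ^ (-(((K + n : ℕ)) : ℝ)) + ε) ^ (d:ℝ) = 1 := by
      rw [← Real.rpow_add (hbpos n)]; simp
    calc f n ≤ ((2:ℝ) ^ (-(((K + n : ℕ)) : ℝ)) + ε) ^ (-(d:ℝ)) *
          ((2:ℝ) ^ (-(((K + n : ℕ)) : ℝ)) + ε) ^ (d:ℝ) := by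
            rw [hf_def]
            exact mul_le_mul_of_nonneg_left (e1 ▸ e2) (Real.rpow_nonneg (hbpos n).le _)
      _ = 1 := e3
  -- bound f n ≤ 2^{d(t - (K+n))}
  have hfle2 : ∀ n, f n ≤ (2:ℝ) ^ ((d:ℝ) * (t - (((K + n : ℕ)) : ℝ))) := by
    intro n
    have e1 : ((2:ℝ) ^ (-(((K + n : ℕ)) : ℝ)) + ε) ^ (-(d:ℝ)) ≤ ε ^ (-(d:ℝ)) :=
      Real.rpow_le_rpow_of_nonpos hε0 (le_add_of_nonneg_left (Real.rpow_nonneg (by norm_num) _))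
        (by linarith)
    have e2 : ε ^ (-(d:ℝ)) = (2:ℝ) ^ ((d:ℝ) * t) := by
      rw [← htε, ← Real.rpow_mul (by norm_num)]; ring_nf
    calc f n ≤ ε ^ (-(d:ℝ)) * (2:ℝ) ^ (-(d:ℝ) * (((K + n : ℕ)) : ℝ)) :=
          mul_le_mul_of_nonneg_right e1 (Real.rpow_nonneg (by norm_num) _)
      _ = (2:ℝ) ^ ((d:ℝ) * (t - (((K + n : ℕ)) : ℝ))) := by
          rw [e2, ← Real.rpow_add two_pos]; ring_nf
  -- summability
  have hle : ∀ n : ℕ, f n ≤ (2:ℝ) ^ ((d:ℝ) * (t - (K:ℝ))) * s ^ n := by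
    intro n
    calc f n ≤ (2:ℝ) ^ ((d:ℝ) * (t - (((K + n : ℕ)) : ℝ))) := hfle2 n
        _ = (2:ℝ) ^ ((d:ℝ) * (t - (K:ℝ))) * s ^ n := by
            rw [hs_def, ← Real.rpow_natCast ((2:ℝ) ^ (-(d:ℝ))) n,
              ← Real.rpow_mul (by norm_num), ← Real.rpow_add two_pos]
            congr 1
            push_cast
            ring
  have hf_sum : Summable f := Summable.of_nonneg_of_le hfnonneg hle
    ((summable_geometric_of_lt_one hs0.le hs1).mul_left _)
  have hsplit := (Summable.sum_add_tsum_nat_add M hf_sum).symm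
  -- finite part
  have hfin : ∑ i ∈ Finset.range M, f i ≤ (M:ℝ) := by
    calc ∑ i ∈ Finset.range M, f i ≤ ∑ i ∈ Finset.range M, (1:ℝ) :=
          Finset.sum_le_sum fun i _ => hfle1 i
      _ = (M:ℝ) := by simp
  -- tail part
  have htail : ∑' n : ℕ, f (n + M) ≤ (2:ℝ) ^ ((d:ℝ) * (t - ((m:ℝ) + 1))) * c := by
    have hb : ∀ n : ℕ, f (n + M) ≤ (2:ℝ) ^ ((d:ℝ) * (t - ((m:ℝ) + 1))) * s ^ n := by
      intro n
      calc f (n + M) ≤ (2:ℝ) ^ ((d:ℝ) * (t - (((K + (n + M) : ℕ)) : ℝ))) := hfle2 (n + M)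
        _ = (2:ℝ) ^ ((d:ℝ) * (t - ((m:ℝ) + 1))) * s ^ n := by
            rw [hs_def, ← Real.rpow_natCast ((2:ℝ) ^ (-(d:ℝ))) n,
              ← Real.rpow_mul (by norm_num), ← Real.rpow_add two_pos]
            congr 1
            have : ((K + (n + M) : ℕ) : ℝ) = (m:ℝ) + 1 + (n:ℝ) := by
              have : K + (n + M) = (m + 1) + n := by omega
              rw [this]; push_cast; ring
            rw [this]; ring
    calc ∑' n : ℕ, f (n + M) ≤ ∑' n : ℕ, (2:ℝ) ^ ((d:ℝ) * (t - ((m:ℝ) + 1))) * s ^ n :=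
          Summable.tsum_le_tsum hb ((summable_nat_add_iff M).mpr hf_sum)
            ((summable_geometric_of_lt_one hs0.le hs1).mul_left _)
      _ = (2:ℝ) ^ ((d:ℝ) * (t - ((m:ℝ) + 1))) * c := by
          rw [tsum_mul_left, tsum_geometric_of_lt_one hs0.le hs1, hc_def]
  -- final arithmetic
  have harith : (M:ℝ) + (2:ℝ) ^ ((d:ℝ) * (t - ((m:ℝ) + 1))) * c ≤ (1 / (1 - s)) * (t - K + 1) := by
    set θ : ℝ := t - m with hθ_def
    have hθ0 : 0 ≤ θ := by simp [hθ_def]; linarith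
    have hθ1 : θ ≤ 1 := by simp [hθ_def]; linarith
    have hMr : (M:ℝ) = (m:ℝ) + 1 - K := by
      have h := congrArg (Nat.cast : ℕ → ℝ) hKM
      push_cast at h
      linarith
    -- B = 2^{d(t-m-1)} = s * 2^{dθ}
    have hB : (2:ℝ) ^ ((d:ℝ) * (t - ((m:ℝ) + 1))) = s * (2:ℝ) ^ ((d:ℝ) * θ) := by
      rw [hs_def, ← Real.rpow_add two_pos]
      congr 1
      rw [hθ_def]; ring
    -- convexity: 2^{dθ} ≤ 1 + (2^d - 1)θ
    have hconv : (2:ℝ) ^ ((d:ℝ) * θ) ≤ 1 + ((2:ℝ) ^ (d:ℝ) - 1) * θ := by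
      have h2d : (1:ℝ) ≤ (2:ℝ) ^ (d:ℝ) := Real.one_le_rpow h2.le (by positivity)
      have := aux_rpow_convex h2d hθ0 hθ1
      calc (2:ℝ) ^ ((d:ℝ) * θ) = ((2:ℝ) ^ (d:ℝ)) ^ θ := by
            rw [← Real.rpow_mul (by norm_num)]
        _ ≤ 1 + ((2:ℝ) ^ (d:ℝ) - 1) * θ := this
    have hsd : s * (2:ℝ) ^ (d:ℝ) = 1 := by
      rw [hs_def, ← Real.rpow_add two_pos]; simp
    have hu : (0:ℝ) ≤ (m:ℝ) - K := by
      have : (K:ℝ) ≤ m := by exact_mod_cast hKm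
      linarith
    have hc1 : 0 < c := by rw [hc_def]; positivity
    -- key: s * 2^{dθ} ≤ s + θ
    have hkey : s * (2:ℝ) ^ ((d:ℝ) * θ) ≤ s + θ := by
      calc s * (2:ℝ) ^ ((d:ℝ) * θ) ≤ s * (1 + ((2:ℝ) ^ (d:ℝ) - 1) * θ) :=
            mul_le_mul_of_nonneg_left hconv hs0.le
        _ = s + (s * (2:ℝ) ^ (d:ℝ)) * θ - s * θ := by ring
        _ = s + θ - s * θ := by rw [hsd]; ring
        _ ≤ s + θ := by nlinarith [hs0.le, hθ0]
    -- now conclude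
    have hrw : (1 / (1 - s)) * (t - K + 1) = c * (((m:ℝ) - K) + 1 + θ) := by
      rw [hc_def, one_div, hθ_def]; ring_nf
    rw [hrw, hB, hMr]
    have hcs : c * (1 - s) = 1 := inv_mul_cancel₀ h1s.ne'
    have hcs0 : 0 ≤ c * s := mul_nonneg hc1.le hs0.le
    have hcge1 : 1 ≤ c := by linarith [hcs, hcs0]
    have h1 : s * (2:ℝ) ^ ((d:ℝ) * θ) * c ≤ (s + θ) * c :=
      mul_le_mul_of_nonneg_right hkey hc1.le
    have h2 : ((m:ℝ) - K) ≤ c * ((m:ℝ) - K) := le_mul_of_one_le_left hu hcge1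
    clear_value t s c m θ M
    linarith [h1, h2, hcs]
  calc ∑' n, f n = ∑ i ∈ Finset.range M, f i + ∑' n : ℕ, f (n + M) := hsplit
    _ ≤ (M:ℝ) + (2:ℝ) ^ ((d:ℝ) * (t - ((m:ℝ) + 1))) * c := add_le_add hfin htail
    _ ≤ (1 / (1 - s)) * (t - K + 1) := harith


lemma aux_part1 (d : ℕ) (hd : 1 ≤ d) (α ε : ℝ) (hε : ε ∈ Set.Ioo (0:ℝ) 1)
    (K : ℕ) (hαpos : 0 < α) :
    ∑' n : ℕ, ((2:ℝ) ^ (-(((K + n : ℕ)) : ℝ)) + ε) ^ (α - (d:ℝ)) *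
        (2:ℝ) ^ (-(d:ℝ) * (((K + n : ℕ)) : ℝ))
      ≤ (2 / (1 - (2:ℝ) ^ (-(min α (d:ℝ))))) * ((2:ℝ) ^ (-(K:ℝ)) + ε) ^ α := by
  obtain ⟨hε0, hε1⟩ := hε
  have h2 : (1:ℝ) < 2 := one_lt_two
  have hdpos : (0:ℝ) < d := by exact_mod_cast hd
  have hminpos : 0 < min α (d:ℝ) := lt_min hαpos hdpos
  set r : ℝ := (2:ℝ) ^ (-(min α (d:ℝ))) with hr_def
  have hr0 : 0 ≤ r := (Real.rpow_pos_of_pos two_pos _).le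
  have hr1 : r < 1 := Real.rpow_lt_one_of_one_lt_of_neg h2 (by linarith)
  set A : ℝ := ((2:ℝ) ^ (-(K:ℝ)) + ε) ^ α with hA_def
  have hbaseK : (0:ℝ) < (2:ℝ) ^ (-(K:ℝ)) + ε :=
    add_pos (Real.rpow_pos_of_pos two_pos _) hε0
  have hA0 : 0 ≤ A := (Real.rpow_pos_of_pos hbaseK _).le
  set f : ℕ → ℝ := fun n => ((2:ℝ) ^ (-(((K + n : ℕ)) : ℝ)) + ε) ^ (α - (d:ℝ)) *
      (2:ℝ) ^ (-(d:ℝ) * (((K + n : ℕ)) : ℝ)) with hf_def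
  have hfnonneg : ∀ n, 0 ≤ f n := fun n =>
    mul_nonneg (Real.rpow_nonneg (add_pos (Real.rpow_pos_of_pos two_pos _) hε0).le _)
      (Real.rpow_nonneg (by norm_num) _)
  have key : ∀ n, f n ≤ A * r ^ n := by
    intro n
    have hm : (((K + n : ℕ)) : ℝ) = (K:ℝ) + (n:ℝ) := by push_cast; ring
    have hbm : (0:ℝ) < (2:ℝ) ^ (-(((K + n : ℕ)) : ℝ)) := Real.rpow_pos_of_pos two_pos _
    have hbm' : (0:ℝ) < (2:ℝ) ^ (-(((K + n : ℕ)) : ℝ)) + ε := add_pos hbm hε0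
    have hrn : r ^ n = (2:ℝ) ^ (-(min α (d:ℝ)) * (n:ℝ)) := by
      rw [hr_def, ← Real.rpow_natCast ((2:ℝ) ^ (-(min α (d:ℝ)))) n,
        ← Real.rpow_mul (by norm_num)]
    rcases le_total α (d:ℝ) with hcase | hcase
    · -- min = α
      have hmin : min α (d:ℝ) = α := min_eq_left hcase
      have step1 : ((2:ℝ) ^ (-(((K + n : ℕ)) : ℝ)) + ε) ^ (α - (d:ℝ)) ≤
          ((2:ℝ) ^ (-(((K + n : ℕ)) : ℝ))) ^ (α - (d:ℝ)) :=
        Real.rpow_le_rpow_of_nonpos hbm (le_add_of_nonneg_right hε0.le) (by linarith)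
      have step2 : ((2:ℝ) ^ (-(((K + n : ℕ)) : ℝ))) ^ (α - (d:ℝ)) *
          (2:ℝ) ^ (-(d:ℝ) * (((K + n : ℕ)) : ℝ)) =
          (2:ℝ) ^ (-(α * (K:ℝ))) * r ^ n := by
        rw [← Real.rpow_mul (by norm_num : (0:ℝ) ≤ 2), ← Real.rpow_add two_pos, hrn, hmin,
          ← Real.rpow_add two_pos]
        congr 1
        rw [hm]; ring
      have step3 : (2:ℝ) ^ (-(α * (K:ℝ))) ≤ A := by
        have : (2:ℝ) ^ (-(α * (K:ℝ))) = ((2:ℝ) ^ (-(K:ℝ))) ^ α := by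
          rw [← Real.rpow_mul (by norm_num)]; ring_nf
        rw [this, hA_def]
        exact Real.rpow_le_rpow (Real.rpow_nonneg (by norm_num) _)
          (le_add_of_nonneg_right hε0.le) hαpos.le
      calc f n ≤ ((2:ℝ) ^ (-(((K + n : ℕ)) : ℝ))) ^ (α - (d:ℝ)) *
            (2:ℝ) ^ (-(d:ℝ) * (((K + n : ℕ)) : ℝ)) :=
              mul_le_mul_of_nonneg_right step1 (Real.rpow_nonneg (by norm_num) _)
        _ = (2:ℝ) ^ (-(α * (K:ℝ))) * r ^ n := step2
        _ ≤ A * r ^ n := mul_le_mul_of_nonneg_right step3 (pow_nonneg hr0 n)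
    · -- min = d
      have hmin : min α (d:ℝ) = (d:ℝ) := min_eq_right hcase
      have hKm : (2:ℝ) ^ (-(((K + n : ℕ)) : ℝ)) ≤ (2:ℝ) ^ (-(K:ℝ)) := by
        apply Real.rpow_le_rpow_of_exponent_le h2.le
        rw [hm]; simp [Nat.cast_nonneg]
      have step1 : ((2:ℝ) ^ (-(((K + n : ℕ)) : ℝ)) + ε) ^ (α - (d:ℝ)) ≤
          ((2:ℝ) ^ (-(K:ℝ)) + ε) ^ (α - (d:ℝ)) :=
        Real.rpow_le_rpow hbm'.le (by linarith) (by linarith)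
      have step2 : (2:ℝ) ^ (-(d:ℝ) * (((K + n : ℕ)) : ℝ)) ≤
          ((2:ℝ) ^ (-(K:ℝ)) + ε) ^ (d:ℝ) * r ^ n := by
        have e1 : (2:ℝ) ^ (-(d:ℝ) * (((K + n : ℕ)) : ℝ)) =
            ((2:ℝ) ^ (-(K:ℝ))) ^ (d:ℝ) * r ^ n := by
          rw [← Real.rpow_mul (by norm_num), hrn, ← Real.rpow_add two_pos, hmin, hm]
          ring_nf
        rw [e1]
        apply mul_le_mul_of_nonneg_right _ (pow_nonneg hr0 n)
        exact Real.rpow_le_rpow (Real.rpow_nonneg (by norm_num) _)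
          (le_add_of_nonneg_right hε0.le) hdpos.le
      calc f n ≤ ((2:ℝ) ^ (-(K:ℝ)) + ε) ^ (α - (d:ℝ)) *
            (((2:ℝ) ^ (-(K:ℝ)) + ε) ^ (d:ℝ) * r ^ n) := by
              apply mul_le_mul step1 step2 (Real.rpow_nonneg (by norm_num) _)
                (Real.rpow_nonneg hbaseK.le _)
        _ = A * r ^ n := by
              rw [← mul_assoc, ← Real.rpow_add hbaseK, hA_def]; ring_nf
  have hg : Summable (fun n => A * r ^ n) :=
    (summable_geometric_of_lt_one hr0 hr1).mul_left A
  have hf_sum : Summable f := Summable.of_nonneg_of_le hfnonneg key hg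
  have h1r : 0 < 1 - r := by linarith
  calc ∑' n, f n ≤ ∑' n, A * r ^ n := Summable.tsum_le_tsum key hf_sum hg
    _ = A * (1 - r)⁻¹ := by rw [tsum_mul_left, tsum_geometric_of_lt_one hr0 hr1]
    _ ≤ (2 / (1 - r)) * A := by
        rw [← div_eq_mul_inv, div_mul_eq_mul_div]
        gcongr
        linarith



/-- Lemma `lem_simple_sumargument` (first part): for `d ≥ 1`, `α ≥ 0`, `ε ∈ (0,1)`,
`N_ε = log₂(1/ε)` and `K ≤ N_ε`, the dyadic sum `∑_{n ≥ K} (2^{-n}+ε)^{α-d} 2^{-dn}`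
is bounded by `(2/(1-2^{-min(α,d)}))(2^{-K}+ε)^α` if `α > 0`, and by
`(1/(1-2^{-d}))(N_ε - K + 1)` if `α = 0`. -/
theorem stmt0 (d : ℕ) (hd : 1 ≤ d) (α ε : ℝ) (hα : 0 ≤ α)
    (hε : ε ∈ Set.Ioo (0:ℝ) 1) (K : ℕ) (hK : (K : ℝ) ≤ Real.logb 2 (1 / ε)) :
    (0 < α →
      ∑' n : ℕ, ((2:ℝ) ^ (-(((K + n : ℕ)) : ℝ)) + ε) ^ (α - (d:ℝ)) *
          (2:ℝ) ^ (-(d:ℝ) * (((K + n : ℕ)) : ℝ))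
        ≤ (2 / (1 - (2:ℝ) ^ (-(min α (d:ℝ))))) * ((2:ℝ) ^ (-(K:ℝ)) + ε) ^ α) ∧
    (α = 0 →
      ∑' n : ℕ, ((2:ℝ) ^ (-(((K + n : ℕ)) : ℝ)) + ε) ^ (-(d:ℝ)) *
          (2:ℝ) ^ (-(d:ℝ) * (((K + n : ℕ)) : ℝ))
        ≤ (1 / (1 - (2:ℝ) ^ (-(d:ℝ)))) * (Real.logb 2 (1 / ε) - K + 1)) := by
  constructor
  · intro hαpos
    exact aux_part1 d hd α ε hε K hαpos
  · intro hα0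
    subst hα0
    simpa using aux_part2 d hd ε hε K hK
end

section
/- For every k ∈ ℕ and every α ∈ ℕ, with ε ∈ (0,1), K ≤ N_ε = ⌊log₂(1/ε)⌋, and d ≥ 1, one has ∑_{n=K}^∞ (2^{-n} + ε)^{α-d} 2^{-dn} ≤ 4 · (N_ε - K + 1)^{1_{α=0}} · (2^{-K} + ε)^α. -/
open Real Finset

private lemma aux_eq (J n : ℕ) :
    (2:ℝ) ^ (-(((J + n : ℕ)) : ℝ)) = (2:ℝ) ^ (-(J:ℝ)) * (1/2:ℝ) ^ n := by
  push_cast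
  rw [neg_add, Real.rpow_add two_pos]
  congr 1
  rw [Real.rpow_neg (by norm_num), Real.rpow_natCast, ← inv_pow, one_div]

private lemma aux_summable (J : ℕ) :
    Summable (fun n : ℕ => (2:ℝ) ^ (-(((J + n : ℕ)) : ℝ))) := by
  simp_rw [aux_eq]
  exact summable_geometric_two.mul_left _

private lemma aux_sum (J : ℕ) :
    ∑' n : ℕ, (2:ℝ) ^ (-(((J + n : ℕ)) : ℝ)) = (2:ℝ) ^ (-(J:ℝ)) * 2 := by
  simp_rw [aux_eq]
  rw [tsum_mul_left, tsum_geometric_two]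

/-- Lemma `lem_simple_sumargument` (second part): for `α ∈ ℕ`, `ε ∈ (0,1)`,
`N_ε = ⌊log₂(1/ε)⌋` and `K ≤ N_ε`,
`∑_{n≥K} (2^{-n}+ε)^{α-d} 2^{-dn} ≤ 4 (N_ε - K + 1)^{1_{α=0}} (2^{-K}+ε)^α`. -/
theorem stmt1 (d : ℕ) (hd : 1 ≤ d) (α : ℕ) (ε : ℝ) (hε : ε ∈ Set.Ioo (0:ℝ) 1)
    (K : ℕ) (hK : (K : ℤ) ≤ ⌊Real.logb 2 (1 / ε)⌋) :
    ∑' n : ℕ, ((2:ℝ) ^ (-(((K + n : ℕ)) : ℝ)) + ε) ^ ((α : ℝ) - (d:ℝ)) *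
        (2:ℝ) ^ (-(d:ℝ) * (((K + n : ℕ)) : ℝ))
      ≤ 4 * ((⌊Real.logb 2 (1 / ε)⌋ : ℝ) - (K:ℝ) + 1) ^ (if α = 0 then 1 else 0) *
          ((2:ℝ) ^ (-(K:ℝ)) + ε) ^ (α : ℝ) := by
  obtain ⟨hε0, hε1⟩ := hε
  set N : ℤ := ⌊Real.logb 2 (1 / ε)⌋ with hNdef
  have hKNr : (K:ℝ) ≤ (N:ℝ) := by exact_mod_cast hK
  have hd1 : (1:ℝ) ≤ (d:ℝ) := by exact_mod_cast hd
  -- ε > 2^{-(N+1)}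
  have hεlow : (2:ℝ) ^ (-((N:ℝ) + 1)) < ε := by
    have h1 : Real.logb 2 (1/ε) < (N:ℝ) + 1 := Int.lt_floor_add_one _
    have h2 : (1/ε) < (2:ℝ) ^ ((N:ℝ) + 1) :=
      (Real.logb_lt_iff_lt_rpow (by norm_num) (by positivity)).mp h1
    rw [Real.rpow_neg (by norm_num)]
    rw [one_div] at h2
    exact (inv_lt_comm₀ hε0 (by positivity)).mp h2
  -- notation for the summand
  set x : ℕ → ℝ := fun n => (2:ℝ) ^ (-(((K + n : ℕ)) : ℝ)) with hxdef
  have hxpos : ∀ n, 0 < x n := fun n => Real.rpow_pos_of_pos two_pos _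
  have hxεpos : ∀ n, 0 < x n + ε := fun n => by have := hxpos n; linarith
  have hxK : ∀ n, x n ≤ (2:ℝ) ^ (-(K:ℝ)) := by
    intro n
    apply Real.rpow_le_rpow_of_exponent_le one_le_two
    push_cast
    have : (0:ℝ) ≤ n := Nat.cast_nonneg n
    linarith
  have hx1 : ∀ n, x n ≤ 1 := fun n =>
    Real.rpow_le_one_of_one_le_of_nonpos one_le_two (neg_nonpos.mpr (by positivity))
  set f : ℕ → ℝ := fun n => (x n + ε) ^ ((α : ℝ) - (d:ℝ)) *
      (2:ℝ) ^ (-(d:ℝ) * (((K + n : ℕ)) : ℝ)) with hfdef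
  have hterm : ∀ n, f n = (x n + ε) ^ ((α : ℝ) - (d:ℝ)) * (x n) ^ (d:ℝ) := by
    intro n
    simp only [hfdef]
    congr 1
    rw [show -(d:ℝ) * (((K + n : ℕ)) : ℝ) = (-(((K + n : ℕ)) : ℝ)) * (d:ℝ) by ring,
      Real.rpow_mul (by norm_num)]
  have hfnonneg : ∀ n, 0 ≤ f n := by
    intro n
    rw [hterm]
    positivity
  -- the key step inequality
  have hstep : ∀ (a : ℝ) (n : ℕ),
      (x n + ε) ^ (a - (d:ℝ)) * (x n) ^ (d:ℝ) ≤ (x n + ε) ^ (a - 1) * x n := by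
    intro a n
    have hx := hxpos n
    have hxε := hxεpos n
    have h1 : (x n) ^ (d:ℝ) = (x n) ^ ((d:ℝ) - 1) * x n := by
      nth_rewrite 3 [← Real.rpow_one (x n)]
      rw [← Real.rpow_add hx]
      ring_nf
    have h2 : (x n) ^ ((d:ℝ) - 1) ≤ (x n + ε) ^ ((d:ℝ) - 1) :=
      Real.rpow_le_rpow hx.le (by linarith) (by linarith)
    calc (x n + ε) ^ (a - (d:ℝ)) * (x n) ^ (d:ℝ)
        = (x n + ε) ^ (a - (d:ℝ)) * (x n) ^ ((d:ℝ) - 1) * x n := by rw [h1]; ring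
      _ ≤ (x n + ε) ^ (a - (d:ℝ)) * (x n + ε) ^ ((d:ℝ) - 1) * x n := by
          apply mul_le_mul_of_nonneg_right _ hx.le
          exact mul_le_mul_of_nonneg_left h2 (Real.rpow_nonneg hxε.le _)
      _ = (x n + ε) ^ (a - 1) * x n := by
          rw [← Real.rpow_add hxε]; ring_nf
  by_cases hα : α = 0
  · -- case α = 0
    subst hα
    simp only [eq_self_iff_true, if_true, pow_one, Nat.cast_zero, Real.rpow_zero, mul_one]
    -- bounds
    have hf1 : ∀ n, f n ≤ 1 := by
      intro n
      rw [hterm]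
      have hxε := hxεpos n
      have h2 : (x n) ^ (d:ℝ) ≤ (x n + ε) ^ (d:ℝ) :=
        Real.rpow_le_rpow (hxpos n).le (by linarith) (by linarith)
      calc (x n + ε) ^ ((0:ℕ) - (d:ℝ)) * (x n) ^ (d:ℝ)
          ≤ (x n + ε) ^ ((0:ℕ) - (d:ℝ)) * (x n + ε) ^ (d:ℝ) :=
            mul_le_mul_of_nonneg_left h2 (Real.rpow_nonneg hxε.le _)
        _ = 1 := by
            rw [← Real.rpow_add hxε]
            norm_num
    -- summability
    have hfle : ∀ n, f n ≤ ε ^ (-(d:ℝ)) * x n := by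
      intro n
      rw [hterm]
      have hxε := hxεpos n
      have h1 : (x n + ε) ^ ((0:ℕ) - (d:ℝ)) ≤ ε ^ (-(d:ℝ)) := by
        rw [show ((0:ℕ) - (d:ℝ)) = -(d:ℝ) by push_cast; ring]
        exact Real.rpow_le_rpow_of_nonpos hε0 (by linarith [hxpos n]) (by linarith)
      have h2 : (x n) ^ (d:ℝ) ≤ x n := by
        nth_rewrite 2 [← Real.rpow_one (x n)]
        exact Real.rpow_le_rpow_of_exponent_ge (hxpos n) (hx1 n) hd1
      exact mul_le_mul h1 h2 (Real.rpow_nonneg (hxpos n).le _) (by positivity)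
    have hfsum : Summable f :=
      Summable.of_nonneg_of_le hfnonneg hfle ((aux_summable K).mul_left _)
    -- split the sum
    have hKN1 : (K:ℤ) ≤ N + 1 := by linarith [hK]
    set M : ℕ := (N + 1).toNat - K with hMdef
    have hN1nn : (0:ℤ) ≤ N + 1 := by
      have : (0:ℤ) ≤ (K:ℤ) := Int.ofNat_nonneg K
      linarith
    have htN : (((N+1).toNat : ℤ)) = N + 1 := Int.toNat_of_nonneg hN1nn
    have hKle : K ≤ (N+1).toNat := by omega
    have hKM : K + M = (N+1).toNat := by omega
    have hM1 : 1 ≤ M := by omega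
    have hMz : (M:ℤ) = N + 1 - K := by omega
    have hMr : (M:ℝ) = (N:ℝ) - (K:ℝ) + 1 := by
      have h := congrArg (fun z : ℤ => (z : ℝ)) hMz
      push_cast at h
      linarith
    rw [← Summable.sum_add_tsum_nat_add M hfsum]
    -- head bound
    have hhead : ∑ i ∈ range M, f i ≤ (M:ℝ) := by
      calc ∑ i ∈ range M, f i ≤ ∑ i ∈ range M, (1:ℝ) :=
            Finset.sum_le_sum (fun i _ => hf1 i)
        _ = (M:ℝ) := by simp
    -- tail bound
    have htail : ∑' i : ℕ, f (i + M) ≤ 2 := by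
      have hxsmall : ∀ i : ℕ, x (i + M) ≤ (2:ℝ) ^ (-((N:ℝ) + 1)) := by
        intro i
        apply Real.rpow_le_rpow_of_exponent_le one_le_two
        have : ((N:ℝ) + 1) ≤ ((K + (i + M) : ℕ) : ℝ) := by
          have h1 : (N+1).toNat ≤ K + (i + M) := by omega
          have h2 : ((N:ℝ) + 1) = (((N+1).toNat : ℕ) : ℝ) := by
            exact_mod_cast htN.symm
          rw [h2]
          exact_mod_cast h1
        linarith
      have hftail : ∀ i : ℕ, f (i + M) ≤ ε⁻¹ * x (i + M) := by
        intro i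
        rw [hterm]
        have hxε := hxεpos (i + M)
        have hxe : x (i + M) ≤ ε := le_of_lt (lt_of_le_of_lt (hxsmall i) hεlow)
        have h1 : (x (i+M) + ε) ^ ((0:ℕ) - (d:ℝ)) ≤ ε ^ (-(d:ℝ)) := by
          rw [show ((0:ℕ) - (d:ℝ)) = -(d:ℝ) by push_cast; ring]
          exact Real.rpow_le_rpow_of_nonpos hε0 (by linarith [hxpos (i+M)]) (by linarith)
        have h2 : (x (i+M)) ^ (d:ℝ) ≤ ε ^ ((d:ℝ) - 1) * x (i+M) := by
          have e1 : (x (i+M)) ^ (d:ℝ) = (x (i+M)) ^ ((d:ℝ) - 1) * x (i+M) := by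
            nth_rewrite 3 [← Real.rpow_one (x (i+M))]
            rw [← Real.rpow_add (hxpos (i+M))]
            ring_nf
          rw [e1]
          apply mul_le_mul_of_nonneg_right _ (hxpos (i+M)).le
          exact Real.rpow_le_rpow (hxpos (i+M)).le hxe (by linarith)
        have e2 : ε ^ (-(d:ℝ)) * (ε ^ ((d:ℝ) - 1) * x (i+M)) = ε⁻¹ * x (i+M) := by
          rw [← mul_assoc, ← Real.rpow_add hε0,
            show (-(d:ℝ) + ((d:ℝ) - 1)) = -1 by ring, Real.rpow_neg_one]
        rw [← e2]
        exact mul_le_mul h1 h2 (Real.rpow_nonneg (hxpos _).le _) (by positivity)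
      have hxshift : ∀ i : ℕ, x (i + M) = (2:ℝ) ^ (-((((K+M) + i : ℕ)) : ℝ)) := by
        intro i
        simp only [hxdef]
        congr 2
        push_cast
        ring
      have hsumtail : Summable (fun i : ℕ => ε⁻¹ * x (i + M)) := by
        simp_rw [hxshift]
        exact (aux_summable (K+M)).mul_left _
      have h1 : ∑' i : ℕ, f (i + M) ≤ ∑' i : ℕ, ε⁻¹ * x (i + M) := by
        apply Summable.tsum_le_tsum hftail _ hsumtail
        exact (summable_nat_add_iff M).mpr hfsum
      have h2 : ∑' i : ℕ, ε⁻¹ * x (i + M) = ε⁻¹ * ((2:ℝ) ^ (-(((K+M):ℕ):ℝ)) * 2) := by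
        simp_rw [hxshift]
        rw [tsum_mul_left, aux_sum]
      have h3 : (2:ℝ) ^ (-(((K+M):ℕ):ℝ)) = (2:ℝ) ^ (-((N:ℝ)+1)) := by
        congr 1
        rw [hKM]
        have : (((N+1).toNat : ℕ) : ℝ) = (N:ℝ) + 1 := by exact_mod_cast htN
        rw [this]
      have h4 : ε⁻¹ * ((2:ℝ) ^ (-((N:ℝ)+1)) * 2) ≤ 2 := by
        have : ε⁻¹ * (2:ℝ) ^ (-((N:ℝ)+1)) ≤ 1 := by
          rw [inv_mul_le_iff₀ hε0]
          simpa using hεlow.le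
        nlinarith [this]
      calc ∑' i : ℕ, f (i + M) ≤ ε⁻¹ * ((2:ℝ) ^ (-(((K+M):ℕ):ℝ)) * 2) := h1.trans h2.le
        _ = ε⁻¹ * ((2:ℝ) ^ (-((N:ℝ)+1)) * 2) := by rw [h3]
        _ ≤ 2 := h4
    have hMr1 : (1:ℝ) ≤ (M:ℝ) := by exact_mod_cast hM1
    calc ∑ i ∈ range M, f i + ∑' i : ℕ, f (i + M) ≤ (M:ℝ) + 2 :=
          add_le_add hhead htail
      _ ≤ 4 * ((N:ℝ) - (K:ℝ) + 1) := by rw [← hMr]; linarith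
  · -- case α ≥ 1
    have hα1 : (1:ℝ) ≤ (α:ℝ) := by
      have : 1 ≤ α := Nat.one_le_iff_ne_zero.mpr hα
      exact_mod_cast this
    simp only [if_neg hα, pow_zero, mul_one]
    set C : ℝ := ((2:ℝ) ^ (-(K:ℝ)) + ε) ^ ((α:ℝ) - 1) with hCdef
    have hBpos : (0:ℝ) < (2:ℝ) ^ (-(K:ℝ)) + ε := by positivity
    have hCpos : 0 < C := Real.rpow_pos_of_pos hBpos _
    have hfle : ∀ n, f n ≤ C * x n := by
      intro n
      rw [hterm]
      calc (x n + ε) ^ ((α:ℝ) - (d:ℝ)) * (x n) ^ (d:ℝ)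
          ≤ (x n + ε) ^ ((α:ℝ) - 1) * x n := hstep (α:ℝ) n
        _ ≤ C * x n := by
            apply mul_le_mul_of_nonneg_right _ (hxpos n).le
            exact Real.rpow_le_rpow (hxεpos n).le (by linarith [hxK n]) (by linarith)
    have hgsum : Summable (fun n => C * x n) := (aux_summable K).mul_left _
    have hfsum : Summable f := Summable.of_nonneg_of_le hfnonneg hfle hgsum
    have h1 : ∑' n, f n ≤ ∑' n, C * x n := Summable.tsum_le_tsum hfle hfsum hgsum
    have h2 : ∑' n, C * x n = C * ((2:ℝ) ^ (-(K:ℝ)) * 2) := by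
      rw [tsum_mul_left, aux_sum]
    have h3 : C * ((2:ℝ) ^ (-(K:ℝ)) + ε) = ((2:ℝ) ^ (-(K:ℝ)) + ε) ^ (α:ℝ) := by
      rw [hCdef]
      nth_rewrite 2 [← Real.rpow_one ((2:ℝ) ^ (-(K:ℝ)) + ε)]
      rw [← Real.rpow_add hBpos]
      ring_nf
    have h2K : (0:ℝ) < (2:ℝ) ^ (-(K:ℝ)) := Real.rpow_pos_of_pos two_pos _
    calc ∑' n, f n ≤ C * ((2:ℝ) ^ (-(K:ℝ)) * 2) := h1.trans h2.le
      _ ≤ C * (((2:ℝ) ^ (-(K:ℝ)) + ε) * 2) := by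
          apply mul_le_mul_of_nonneg_left _ hCpos.le
          linarith
      _ = 2 * (C * ((2:ℝ) ^ (-(K:ℝ)) + ε)) := by ring
      _ = 2 * ((2:ℝ) ^ (-(K:ℝ)) + ε) ^ (α:ℝ) := by rw [h3]
      _ ≤ 4 * ((2:ℝ) ^ (-(K:ℝ)) + ε) ^ (α:ℝ) := by
          have : (0:ℝ) ≤ ((2:ℝ) ^ (-(K:ℝ)) + ε) ^ (α:ℝ) := Real.rpow_nonneg hBpos.le _
          linarith
end

section
/- For every k ∈ ℕ, with λ_ε = λ̂ (log(1/ε))^{-1/2} and N_ε = ⌊log₂(1/ε)⌋, the quantity λ_ε^{2(k+1)} · | ∑_{n=K}^{N_ε - 1} (N_ε - n)^k − (N_ε − K)^{k+1}/(k+1) | tends to 0 as ε → 0, uniformly over K ∈ {0, …, N_ε − 1}. -/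
/-!
Comparing `∑_{m=1}^{M} m^k` with `∫_0^M x^k = M^(k+1)/(k+1)` from above and below (the integrand is
monotone) puts the error in `[0, M^k]`. With `M = N_ε - K ≤ log(1/ε) / log 2` and
`λ_ε^(2(k+1)) = λ̂^(2(k+1)) / log(1/ε)^(k+1)`, the weighted error is at most
`λ̂^(2(k+1)) / (log 2)^k / log(1/ε)`, which tends to `0`.
-/

open Finset Filter Topology

theorem sum_range_succ_pow_sub_div_mem_Icc (k M : ℕ) :
    (∑ i ∈ range M, ((i + 1 : ℕ) : ℝ) ^ k) - (M : ℝ) ^ (k + 1) / (k + 1) ∈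
      Set.Icc 0 ((M : ℝ) ^ k) := by
  have hmono : MonotoneOn (fun x : ℝ => x ^ k) (Set.Icc ((0 : ℕ) : ℝ) M) :=
    pow_left_monotoneOn.mono fun x hx => by simpa using hx.1
  have hint : ∫ x in ((0 : ℕ) : ℝ)..M, x ^ k = (M : ℝ) ^ (k + 1) / (k + 1) := by
    simp [integral_pow]
  have hlower := hmono.sum_le_integral_Ico (Nat.zero_le M)
  have hupper := hmono.integral_le_sum_Ico (Nat.zero_le M)
  rw [hint, Nat.Ico_zero_eq_range] at hlower hupper
  -- the upper and lower Riemann sums differ by `M^k - 0^k`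
  have htelescope := sum_range_succ' (fun i : ℕ => (i : ℝ) ^ k) M
  rw [sum_range_succ] at htelescope
  have : (0 : ℝ) ≤ 0 ^ k := pow_nonneg le_rfl k
  push_cast at htelescope hupper ⊢
  constructor <;> linarith

theorem sum_Ico_sub_pow_eq (k K N : ℕ) (hKN : K ≤ N) :
    ∑ n ∈ Ico K N, ((N - n : ℕ) : ℝ) ^ k = ∑ i ∈ range (N - K), ((i + 1 : ℕ) : ℝ) ^ k := by
  rw [sum_Ico_reflect (fun j : ℕ => (j : ℝ) ^ k) K (Nat.le_succ N), sum_Ico_eq_sum_range]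
  have hlen : N + 1 - K - (N + 1 - N) = N - K := by omega
  rw [hlen, Nat.add_sub_cancel_left]
  simp_rw [add_comm 1]

theorem abs_sum_Ico_sub_pow_sub_le (k K N : ℕ) (hKN : K ≤ N) :
    |∑ n ∈ Ico K N, ((N - n : ℕ) : ℝ) ^ k - ((N : ℝ) - K) ^ (k + 1) / (k + 1)|
      ≤ ((N : ℝ) - K) ^ k := by
  have h := sum_range_succ_pow_sub_div_mem_Icc k (N - K)
  rw [← sum_Ico_sub_pow_eq k K N hKN, Nat.cast_sub hKN] at h
  exact (abs_of_nonneg h.1).trans_le h.2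

theorem div_pow_mul_abs_sum_Ico_sub_pow_sub_le (k K N : ℕ) (hKN : K ≤ N) {A L c : ℝ}
    (hA : 0 ≤ A) (hL : 0 < L) (hc : 0 < c) (hN : (N : ℝ) ≤ L / c) :
    (A / L) ^ (k + 1) * |∑ n ∈ Ico K N, ((N - n : ℕ) : ℝ) ^ k - ((N : ℝ) - K) ^ (k + 1) / (k + 1)|
      ≤ A ^ (k + 1) / c ^ k / L := by
  have hNK : 0 ≤ (N : ℝ) - K := sub_nonneg.mpr (Nat.cast_le.mpr hKN)
  have hNKle : (N : ℝ) - K ≤ L / c := by linarith [(K.cast_nonneg : (0 : ℝ) ≤ K)]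
  calc _ ≤ (A / L) ^ (k + 1) * (L / c) ^ k := by
        gcongr
        exact (abs_sum_Ico_sub_pow_sub_le k K N hKN).trans (pow_le_pow_left₀ hNK hNKle k)
    _ = A ^ (k + 1) / c ^ k / L := by
        rw [div_pow, div_pow]
        field_simp
        ring

theorem mul_rpow_neg_half_pow_two_mul (a L : ℝ) (hL : 0 ≤ L) (j : ℕ) :
    (a * L ^ (-(1 / 2 : ℝ))) ^ (2 * j) = (a ^ 2 / L) ^ j := by
  have hsq : (L ^ (-(1 / 2 : ℝ))) ^ 2 = L⁻¹ := by
    rw [← Real.rpow_natCast, ← Real.rpow_mul hL]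
    norm_num [Real.rpow_neg_one]
  rw [pow_mul, mul_pow, hsq, div_eq_mul_inv]

theorem toNat_floor_logb_le (b x : ℝ) (hx : 0 ≤ Real.logb b x) :
    ((⌊Real.logb b x⌋.toNat : ℕ) : ℝ) ≤ Real.log x / Real.log b := by
  rw [Int.floor_toNat]
  exact Nat.floor_le hx

theorem tendsto_div_log_one_div_nhdsGT_zero (C : ℝ) :
    Tendsto (fun ε : ℝ => C / Real.log (1 / ε)) (𝓝[>] 0) (𝓝 0) := by
  have : Tendsto (fun ε : ℝ => Real.log (1 / ε)) (𝓝[>] 0) atTop := by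
    simpa [Real.log_inv] using Real.tendsto_log_nhdsGT_zero
  exact tendsto_const_nhds.div_atTop this

/-- Lemma `lem_logsum`: with `λ_ε = λ̂ (log(1/ε))^{-1/2}` and `N_ε = ⌊log₂(1/ε)⌋`,
`λ_ε^{2(k+1)} |∑_{n=K}^{N_ε-1} (N_ε-n)^k - (N_ε-K)^{k+1}/(k+1)| → 0` as `ε → 0`,
uniformly over `K ∈ {0, …, N_ε - 1}`. -/
theorem stmt2 (k : ℕ) (lamhat : ℝ) :
    ∀ δ > (0:ℝ), ∃ ε₀ > (0:ℝ), ∀ ε : ℝ, 0 < ε → ε < ε₀ → ε < 1 →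
      ∀ K : ℕ, K < (⌊Real.logb 2 (1 / ε)⌋).toNat →
        (lamhat * Real.log (1 / ε) ^ (-(1/2 : ℝ))) ^ (2 * (k + 1)) *
            |(∑ n ∈ Finset.Ico K (⌊Real.logb 2 (1 / ε)⌋).toNat,
                ((((⌊Real.logb 2 (1 / ε)⌋).toNat - n : ℕ) : ℝ)) ^ k) -
              (((⌊Real.logb 2 (1 / ε)⌋).toNat : ℝ) - (K : ℝ)) ^ (k + 1) / (k + 1)|
          < δ := by
  intro δ hδ
  obtain ⟨ε₀, hε₀, hsmall⟩ := (nhdsGT_basis (0 : ℝ)).eventually_iff.mp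
    ((tendsto_div_log_one_div_nhdsGT_zero ((lamhat ^ 2) ^ (k + 1) / Real.log 2 ^ k)).eventually
      (eventually_lt_nhds hδ))
  refine ⟨ε₀, hε₀, fun ε hε hεε₀ hε1 K hK => lt_of_le_of_lt ?_ (hsmall ⟨hε, hεε₀⟩)⟩
  have hL : 0 < Real.log (1 / ε) := Real.log_pos (by rw [lt_div_iff₀ hε]; linarith)
  have hlogb : 0 ≤ Real.logb 2 (1 / ε) :=
    Real.logb_nonneg one_lt_two (by rw [le_div_iff₀ hε]; linarith)
  rw [mul_rpow_neg_half_pow_two_mul _ _ hL.le]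
  exact div_pow_mul_abs_sum_Ico_sub_pow_sub_le k K _ hK.le (sq_nonneg lamhat) hL
    (Real.log_pos one_lt_two) (toNat_floor_logb_le 2 _ hlogb)
end

section
/- With G_ε the mollified Green's function of (1 − Δ) on 𝕋⁴ as above, there exists C > 0 such that for all ε ∈ (0,1) and all x with |x| ≥ 2ε: 1/(4π²(|x|+ε)²) + (1/(8π²)) log|x| − C ≤ G_ε(x) ≤ 1/(4π²(|x|−ε)²) + (1/(8π²)) log|x| + C. -/
open MeasureTheory Real

noncomputable section

/-- The Euclidean norm on `Fin 4 → ℝ` (we work with periodic functions on `ℝ⁴`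
representing functions on the torus `𝕋⁴ = (ℝ/2πℤ)⁴`). -/
def enorm4 (x : Fin 4 → ℝ) : ℝ := Real.sqrt (∑ i, (x i) ^ 2)

/-- A point of the lattice `(2πℤ)⁴`. -/
def lpt (k : Fin 4 → ℤ) : Fin 4 → ℝ := fun i => 2 * Real.pi * (k i)

/-- Geodesic distance of (the torus point represented by) `x` to `0`,
i.e. the Euclidean distance of `x` to the lattice `(2πℤ)⁴`. -/
def latDist (x : Fin 4 → ℝ) : ℝ := ⨅ k : Fin 4 → ℤ, enorm4 (x - lpt k)

/-- The set of points representing `𝕋⁴ \ {0}`. -/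
def Sreg : Set (Fin 4 → ℝ) := {x | ∀ k : Fin 4 → ℤ, x ≠ lpt k}

/-- A fundamental domain `(-π, π]⁴` for the torus. -/
def FD : Set (Fin 4 → ℝ) := {x | ∀ i, x i ∈ Set.Ioc (-Real.pi) Real.pi}

/-- `(2πℤ)⁴`-periodicity, i.e. `f` represents a function on `𝕋⁴`. -/
def Per (f : (Fin 4 → ℝ) → ℝ) : Prop :=
  ∀ (x : Fin 4 → ℝ) (k : Fin 4 → ℤ), f (x + lpt k) = f x

/-- The Laplacian of `φ`. -/
def lap (φ : (Fin 4 → ℝ) → ℝ) (x : Fin 4 → ℝ) : ℝ :=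
  ∑ i, fderiv ℝ (fun y => fderiv ℝ φ y (Pi.single i 1)) x (Pi.single i 1)


/-- The rescaled mollifier `ρ_ε(x) = ε^{-4} ρ(x/ε)`. -/
def moll (ρ : (Fin 4 → ℝ) → ℝ) (ε : ℝ) (x : Fin 4 → ℝ) : ℝ :=
  ε⁻¹ ^ 4 * ρ (fun i => x i / ε)

/-- The mollified Green's function `G_ε = ρ_ε ⋆ G`. -/
def Geps (g ρ : (Fin 4 → ℝ) → ℝ) (ε : ℝ) (x : Fin 4 → ℝ) : ℝ :=
  ∫ y : Fin 4 → ℝ, moll ρ ε y * g (x - y)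

/-! ### Auxiliary lemmas -/

lemma enorm4_eq_norm (x : Fin 4 → ℝ) :
    enorm4 x = ‖(EuclideanSpace.equiv (Fin 4) ℝ).symm x‖ := by
  rw [EuclideanSpace.norm_eq]
  simp [enorm4, sq_abs]

lemma enorm4_nonneg (x : Fin 4 → ℝ) : 0 ≤ enorm4 x := Real.sqrt_nonneg _

lemma enorm4_neg (x : Fin 4 → ℝ) : enorm4 (-x) = enorm4 x := by
  simp only [enorm4_eq_norm, map_neg, norm_neg]

lemma enorm4_sub_comm (x y : Fin 4 → ℝ) : enorm4 (x - y) = enorm4 (y - x) := by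
  simp only [enorm4_eq_norm, map_sub]
  exact norm_sub_rev _ _

lemma enorm4_triangle (x y : Fin 4 → ℝ) : enorm4 (x + y) ≤ enorm4 x + enorm4 y := by
  simp only [enorm4_eq_norm, map_add]
  exact norm_add_le _ _

lemma latDist_nonneg (x : Fin 4 → ℝ) : 0 ≤ latDist x :=
  le_ciInf fun _ => enorm4_nonneg _

lemma latDist_le (x : Fin 4 → ℝ) (k : Fin 4 → ℤ) : latDist x ≤ enorm4 (x - lpt k) :=
  ciInf_le ⟨0, fun _ ⟨k', hk⟩ => hk ▸ enorm4_nonneg _⟩ k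

lemma latDist_le_add (a b : Fin 4 → ℝ) : latDist a ≤ latDist b + enorm4 (a - b) := by
  have h : ∀ k, latDist a - enorm4 (a - b) ≤ enorm4 (b - lpt k) := by
    intro k
    have h1 : latDist a ≤ enorm4 (a - lpt k) := latDist_le a k
    have h2 : enorm4 (a - lpt k) ≤ enorm4 (b - lpt k) + enorm4 (a - b) := by
      have : a - lpt k = (b - lpt k) + (a - b) := by abel
      rw [this]; exact enorm4_triangle _ _
    linarith
  have := le_ciInf h
  simp only [latDist] at *
  linarith

lemma latDist_lip (a b : Fin 4 → ℝ) : |latDist a - latDist b| ≤ enorm4 (a - b) := by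
  rw [abs_le]
  constructor
  · have := latDist_le_add b a
    rw [enorm4_sub_comm b a] at this
    linarith
  · have := latDist_le_add a b
    linarith

lemma enorm4_div (y : Fin 4 → ℝ) {ε : ℝ} (hε : 0 < ε) :
    enorm4 (fun i => y i / ε) = enorm4 y / ε := by
  unfold enorm4
  have : ∀ i : Fin 4, (y i / ε) ^ 2 = (y i) ^ 2 / ε ^ 2 := fun i => div_pow _ _ _
  simp_rw [this, ← Finset.sum_div]
  rw [Real.sqrt_div (by positivity), Real.sqrt_sq hε.le]

lemma rho_ball_support (ρ : (Fin 4 → ℝ) → ℝ)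
    (hρrad : ∀ x y, enorm4 x = enorm4 y → ρ x = ρ y)
    (hρsupp : ∀ x, ρ x ≠ 0 → ∀ i, |x i| < 1) :
    ∀ x, ρ x ≠ 0 → enorm4 x < 1 := by
  intro x hx
  set s := enorm4 x with hs
  have hs0 : 0 ≤ s := Real.sqrt_nonneg _
  set z : Fin 4 → ℝ := fun i => if i = 0 then s else 0 with hz
  have hnz : enorm4 z = s := by
    unfold enorm4
    rw [Fin.sum_univ_four]
    simp [hz, Real.sqrt_sq hs0]
  have : ρ z ≠ 0 := by rw [hρrad z x (by rw [hnz])]; exact hx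
  have := hρsupp z this 0
  simpa [hz, abs_of_nonneg hs0] using this

lemma moll_support {ρ : (Fin 4 → ℝ) → ℝ} {ε : ℝ} (hε : 0 < ε)
    (hρrad : ∀ x y, enorm4 x = enorm4 y → ρ x = ρ y)
    (hρsupp : ∀ x, ρ x ≠ 0 → ∀ i, |x i| < 1) :
    ∀ y, moll ρ ε y ≠ 0 → enorm4 y < ε := by
  intro y hy
  have hρ : ρ (fun i => y i / ε) ≠ 0 := by
    intro h; apply hy; unfold moll; rw [h, mul_zero]
  have := rho_ball_support ρ hρrad hρsupp _ hρ
  rw [enorm4_div y hε] at this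
  calc enorm4 y = enorm4 y / ε * ε := by field_simp
  _ < 1 * ε := by exact mul_lt_mul_of_pos_right this hε
  _ = ε := one_mul ε

lemma moll_nonneg {ρ : (Fin 4 → ℝ) → ℝ} {ε : ℝ} (hε : 0 < ε)
    (hρpos : ∀ x, 0 ≤ ρ x) (y : Fin 4 → ℝ) : 0 ≤ moll ρ ε y :=
  mul_nonneg (pow_nonneg (inv_nonneg.mpr hε.le) 4) (hρpos _)

lemma moll_continuous {ρ : (Fin 4 → ℝ) → ℝ} (hρ : Continuous ρ) (ε : ℝ) :
    Continuous (moll ρ ε) := by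
  apply continuous_const.mul
  exact hρ.comp (continuous_pi fun i => by fun_prop)

lemma moll_compact_support {ρ : (Fin 4 → ℝ) → ℝ} {ε : ℝ} (hε : 0 < ε)
    (hρsupp : ∀ x, ρ x ≠ 0 → ∀ i, |x i| < 1) :
    HasCompactSupport (moll ρ ε) := by
  apply HasCompactSupport.intro (isCompact_univ_pi (fun i : Fin 4 => isCompact_Icc
    (a := -ε) (b := ε)))
  intro y hy
  by_contra h
  have hρ : ρ (fun i => y i / ε) ≠ 0 := fun h0 => h (by unfold moll; rw [h0, mul_zero])
  have h2 := hρsupp _ hρ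
  apply hy
  intro i _
  have := h2 i
  rw [abs_div, abs_of_pos hε, div_lt_one hε] at this
  have := abs_lt.mp this
  exact Set.mem_Icc.mpr ⟨this.1.le, this.2.le⟩

lemma moll_integral {ρ : (Fin 4 → ℝ) → ℝ} {ε : ℝ} (hε : 0 < ε)
    (hρint : ∫ x : Fin 4 → ℝ, ρ x = 1) :
    ∫ y : Fin 4 → ℝ, moll ρ ε y = 1 := by
  have h1 : ∀ y : Fin 4 → ℝ, (fun i => y i / ε) = ε⁻¹ • y := by
    intro y; funext i; simp [div_eq_inv_mul]
  have : ∫ y : Fin 4 → ℝ, moll ρ ε y = ε⁻¹ ^ 4 * ∫ y : Fin 4 → ℝ, ρ (ε⁻¹ • y) := by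
    unfold moll
    simp_rw [h1]
    exact integral_const_mul _ _
  rw [this, MeasureTheory.Measure.integral_comp_inv_smul volume ρ ε, hρint]
  have : Module.finrank ℝ (Fin 4 → ℝ) = 4 := Module.finrank_fin_fun ℝ
  rw [this, smul_eq_mul, mul_one, abs_of_pos (by positivity : (0:ℝ) < ε ^ 4)]
  field_simp

lemma key_bounds (C₀ : ℝ) {d D ε : ℝ} (hε : 0 < ε) (hD : 2 * ε ≤ D)
    (h1 : D - ε ≤ d) (h2 : d ≤ D + ε) {v : ℝ}
    (hv : |v - 1 / (4 * π ^ 2 * d ^ 2) - (1 / (8 * π ^ 2)) * Real.log d| ≤ C₀) :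
    1 / (4 * π ^ 2 * (D + ε) ^ 2) + (1 / (8 * π ^ 2)) * Real.log D
        - (|C₀| + Real.log 2 / (8 * π ^ 2) + 1) ≤ v ∧
      v ≤ 1 / (4 * π ^ 2 * (D - ε) ^ 2) + (1 / (8 * π ^ 2)) * Real.log D
        + (|C₀| + Real.log 2 / (8 * π ^ 2) + 1) := by
  have hπ : (0:ℝ) < π ^ 2 := by positivity
  have hDε : 0 < D - ε := by linarith
  have hd : 0 < d := lt_of_lt_of_le hDε h1
  have hD0 : 0 < D := by linarith
  have hC : C₀ ≤ |C₀| := le_abs_self C₀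
  obtain ⟨hv1, hv2⟩ := abs_le.mp hv
  have hsq1 : (D - ε) ^ 2 ≤ d ^ 2 := pow_le_pow_left₀ hDε.le h1 2
  have hsq2 : d ^ 2 ≤ (D + ε) ^ 2 := pow_le_pow_left₀ hd.le h2 2
  have hb1 : 1 / (4 * π ^ 2 * d ^ 2) ≤ 1 / (4 * π ^ 2 * (D - ε) ^ 2) := by
    apply one_div_le_one_div_of_le (by positivity)
    exact mul_le_mul_of_nonneg_left hsq1 (by positivity)
  have hb2 : 1 / (4 * π ^ 2 * (D + ε) ^ 2) ≤ 1 / (4 * π ^ 2 * d ^ 2) := by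
    apply one_div_le_one_div_of_le (by positivity)
    exact mul_le_mul_of_nonneg_left hsq2 (by positivity)
  have hlog1 : Real.log d ≤ Real.log D + Real.log 2 := by
    have : d ≤ 2 * D := by linarith
    calc Real.log d ≤ Real.log (2 * D) := Real.log_le_log hd this
    _ = Real.log 2 + Real.log D := Real.log_mul (by norm_num) hD0.ne'
    _ = Real.log D + Real.log 2 := by ring
  have hlog2 : Real.log D - Real.log 2 ≤ Real.log d := by
    have hhalf : D / 2 ≤ d := by linarith
    calc Real.log D - Real.log 2 = Real.log (D / 2) := (Real.log_div hD0.ne' (by norm_num)).symm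
    _ ≤ Real.log d := Real.log_le_log (by positivity) hhalf
  have hc8 : (0:ℝ) < 1 / (8 * π ^ 2) := by positivity
  have hm1 : (1 / (8 * π ^ 2)) * Real.log d
      ≤ (1 / (8 * π ^ 2)) * (Real.log D + Real.log 2) :=
    mul_le_mul_of_nonneg_left hlog1 hc8.le
  have hm2 : (1 / (8 * π ^ 2)) * (Real.log D - Real.log 2)
      ≤ (1 / (8 * π ^ 2)) * Real.log d :=
    mul_le_mul_of_nonneg_left hlog2 hc8.le
  have hexpand1 : (1 / (8 * π ^ 2)) * (Real.log D + Real.log 2)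
      = (1 / (8 * π ^ 2)) * Real.log D + Real.log 2 / (8 * π ^ 2) := by ring
  have hexpand2 : (1 / (8 * π ^ 2)) * (Real.log D - Real.log 2)
      = (1 / (8 * π ^ 2)) * Real.log D - Real.log 2 / (8 * π ^ 2) := by ring
  constructor <;> nlinarith [abs_nonneg C₀]

/-- Lemma `lem_greens_function_order_bound`, second bound: for `|x| ≥ 2ε`,
`1/(4π²(|x|+ε)²) + (1/(8π²))log|x| - C ≤ G_ε(x) ≤ 1/(4π²(|x|-ε)²) + (1/(8π²))log|x| + C`. -/
theorem stmt10 (g ρ : (Fin 4 → ℝ) → ℝ)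
    (hper : Per g) (hloc : LocallyIntegrable g volume) (C₀ : ℝ)
    (hexp : ∀ x ∈ Sreg,
      |g x - 1 / (4 * Real.pi ^ 2 * latDist x ^ 2)
          - (1 / (8 * Real.pi ^ 2)) * Real.log (latDist x)| ≤ C₀)
    (hρsmooth : ContDiff ℝ (⊤ : ℕ∞) ρ) (hρpos : ∀ x, 0 ≤ ρ x)
    (hρrad : ∀ x y, enorm4 x = enorm4 y → ρ x = ρ y)
    (hρsupp : ∀ x, ρ x ≠ 0 → ∀ i, |x i| < 1)
    (hρint : ∫ x : Fin 4 → ℝ, ρ x = 1) :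
    ∃ C : ℝ, 0 < C ∧ ∀ ε ∈ Set.Ioo (0:ℝ) 1, ∀ x : Fin 4 → ℝ, 2 * ε ≤ latDist x →
      1 / (4 * Real.pi ^ 2 * (latDist x + ε) ^ 2)
          + (1 / (8 * Real.pi ^ 2)) * Real.log (latDist x) - C ≤ Geps g ρ ε x ∧
        Geps g ρ ε x ≤ 1 / (4 * Real.pi ^ 2 * (latDist x - ε) ^ 2)
          + (1 / (8 * Real.pi ^ 2)) * Real.log (latDist x) + C := by
  have hπ : (0:ℝ) < π ^ 2 := by positivity
  refine ⟨|C₀| + Real.log 2 / (8 * π ^ 2) + 1, by positivity, ?_⟩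
  rintro ε ⟨hε0, hε1⟩ x hx
  set C : ℝ := |C₀| + Real.log 2 / (8 * π ^ 2) + 1 with hCdef
  set D : ℝ := latDist x with hDdef
  -- bounds on the integrand
  set U : ℝ := 1 / (4 * π ^ 2 * (D - ε) ^ 2) + (1 / (8 * π ^ 2)) * Real.log D + C with hUdef
  set L : ℝ := 1 / (4 * π ^ 2 * (D + ε) ^ 2) + (1 / (8 * π ^ 2)) * Real.log D - C with hLdef
  -- a.e. regularity
  have hcnt : Set.Countable {y : Fin 4 → ℝ | ¬ (x - y) ∈ Sreg} := by
    apply Set.Countable.mono _ (Set.countable_range (fun k : Fin 4 → ℤ => x - lpt k))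
    intro y hy
    simp only [Sreg, Set.mem_setOf_eq, not_forall, not_not] at hy
    obtain ⟨k, hk⟩ := hy
    exact ⟨k, show x - lpt k = y by rw [← hk]; abel⟩
  have hae : ∀ᵐ y : Fin 4 → ℝ, (x - y) ∈ Sreg := by
    rw [MeasureTheory.ae_iff]
    exact hcnt.measure_zero volume
  -- pointwise bounds where the mollifier is nonzero
  have hkey : ∀ y : Fin 4 → ℝ, (x - y) ∈ Sreg → moll ρ ε y ≠ 0 →
      L ≤ g (x - y) ∧ g (x - y) ≤ U := by
    intro y hreg hm
    have hny : enorm4 y < ε := moll_support hε0 hρrad hρsupp y hm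
    have hlip : |latDist (x - y) - D| ≤ enorm4 y := by
      have := latDist_lip (x - y) x
      have hxy : (x - y) - x = -y := by abel
      rw [hxy, enorm4_neg] at this
      exact this
    obtain ⟨hl1, hl2⟩ := abs_le.mp hlip
    have h1 : D - ε ≤ latDist (x - y) := by linarith
    have h2 : latDist (x - y) ≤ D + ε := by linarith
    exact key_bounds C₀ hε0 hx h1 h2 (hexp (x - y) hreg)
  -- basic facts about the mollifier
  have hρc : Continuous ρ := hρsmooth.continuous
  have hmc : Continuous (moll ρ ε) := moll_continuous hρc ε
  have hmcs : HasCompactSupport (moll ρ ε) := moll_compact_support hε0 hρsupp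
  have hmint : Integrable (moll ρ ε) volume := hmc.integrable_of_hasCompactSupport hmcs
  have hm1 : ∫ y : Fin 4 → ℝ, moll ρ ε y = 1 := moll_integral hε0 hρint
  have hmnn : ∀ y, 0 ≤ moll ρ ε y := moll_nonneg hε0 hρpos
  -- measurability of the integrand
  have hφ : MeasurePreserving (fun y : Fin 4 → ℝ => x - y) volume volume :=
    Measure.measurePreserving_sub_left volume x
  have hgm : AEStronglyMeasurable (fun y : Fin 4 → ℝ => g (x - y)) volume :=
    hloc.aestronglyMeasurable.comp_measurePreserving hφ
  -- integrability of the integrand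
  have hρcs : HasCompactSupport ρ := by
    apply HasCompactSupport.intro (isCompact_univ_pi (fun i : Fin 4 => isCompact_Icc
      (a := (-1:ℝ)) (b := 1)))
    intro y hy
    by_contra h
    exact hy fun i _ => Set.mem_Icc.mpr
      ⟨(abs_lt.mp (hρsupp y h i)).1.le, (abs_lt.mp (hρsupp y h i)).2.le⟩
  obtain ⟨M, hM⟩ := hρcs.exists_bound_of_continuous hρc
  have hM0 : 0 ≤ M := le_trans (norm_nonneg _) (hM 0)
  set K : Set (Fin 4 → ℝ) := Set.univ.pi fun _ : Fin 4 => Set.Icc (-ε) ε with hKdef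
  have hKc : IsCompact K := isCompact_univ_pi fun _ => isCompact_Icc
  have hKm : MeasurableSet K := MeasurableSet.univ_pi fun _ => measurableSet_Icc
  have hφc : Continuous (fun y : Fin 4 → ℝ => x - y) := continuous_const.sub continuous_id
  have hK2 : IsCompact ((fun y : Fin 4 → ℝ => x - y) '' K) := hKc.image hφc
  have hK2m : MeasurableSet ((fun y : Fin 4 → ℝ => x - y) '' K) :=
    hK2.isClosed.measurableSet
  have hIg : IntegrableOn g ((fun y : Fin 4 → ℝ => x - y) '' K) volume :=
    hloc.integrableOn_isCompact hK2
  have hIOn : IntegrableOn (fun y : Fin 4 → ℝ => g (x - y)) K volume := by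
    have hind : Integrable (((fun y : Fin 4 → ℝ => x - y) '' K).indicator g) volume :=
      (integrable_indicator_iff hK2m).mpr hIg
    have hcomp : Integrable
        ((((fun y : Fin 4 → ℝ => x - y) '' K).indicator g) ∘ (fun y : Fin 4 → ℝ => x - y))
        volume :=
      (hφ.integrable_comp hind.aestronglyMeasurable).mpr hind
    have heq : (((fun y : Fin 4 → ℝ => x - y) '' K).indicator g) ∘ (fun y : Fin 4 → ℝ => x - y)
        = ((fun y : Fin 4 → ℝ => x - y) ⁻¹' ((fun y : Fin 4 → ℝ => x - y) '' K)).indicator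
          (fun y : Fin 4 → ℝ => g (x - y)) := by
      funext y
      exact (Set.indicator_comp_right (fun y : Fin 4 → ℝ => x - y)).symm
    rw [heq] at hcomp
    have hpreim : IntegrableOn (fun y : Fin 4 → ℝ => g (x - y))
        ((fun y : Fin 4 → ℝ => x - y) ⁻¹' ((fun y : Fin 4 → ℝ => x - y) '' K)) volume :=
      (integrable_indicator_iff (hφc.measurable hK2m)).mp hcomp
    exact hpreim.mono_set (Set.subset_preimage_image _ _)
  have hmemK : ∀ y : Fin 4 → ℝ, moll ρ ε y ≠ 0 → y ∈ K := by
    intro y hm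
    have hρ : ρ (fun i => y i / ε) ≠ 0 := by
      intro h; apply hm; unfold moll; rw [h, mul_zero]
    intro i _
    have := hρsupp _ hρ i
    rw [abs_div, abs_of_pos hε0, div_lt_one hε0] at this
    have := abs_lt.mp this
    exact Set.mem_Icc.mpr ⟨this.1.le, this.2.le⟩
  have hFm : AEStronglyMeasurable (fun y : Fin 4 → ℝ => moll ρ ε y * g (x - y)) volume :=
    hmc.aestronglyMeasurable.mul hgm
  have hdom : Integrable (K.indicator fun y : Fin 4 → ℝ => ε⁻¹ ^ 4 * M * ‖g (x - y)‖)
      volume := by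
    apply IntegrableOn.integrable_indicator _ hKm
    exact (hIOn.norm.const_mul _)
  have hFint : Integrable (fun y : Fin 4 → ℝ => moll ρ ε y * g (x - y)) volume := by
    apply Integrable.mono' hdom hFm
    apply Filter.Eventually.of_forall
    intro y
    by_cases hy : moll ρ ε y = 0
    · rw [hy, zero_mul, norm_zero]
      exact Set.indicator_nonneg (fun z _ => by positivity) y
    · have hyK : y ∈ K := hmemK y hy
      rw [Set.indicator_of_mem hyK, norm_mul]
      apply mul_le_mul_of_nonneg_right _ (norm_nonneg _)
      have : ‖moll ρ ε y‖ = ε⁻¹ ^ 4 * ‖ρ (fun i => y i / ε)‖ := by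
        unfold moll
        rw [norm_mul, norm_pow, norm_inv, Real.norm_of_nonneg hε0.le]
      rw [this]
      exact mul_le_mul_of_nonneg_left (hM _) (by positivity)
  -- a.e. comparison and conclusion
  have hupper : Geps g ρ ε x ≤ U := by
    have hmono : ∀ᵐ y : Fin 4 → ℝ, moll ρ ε y * g (x - y) ≤ moll ρ ε y * U := by
      filter_upwards [hae] with y hy
      by_cases hm : moll ρ ε y = 0
      · rw [hm, zero_mul, zero_mul]
      · exact mul_le_mul_of_nonneg_left ((hkey y hy hm).2) (hmnn y)
    have := integral_mono_ae hFint (hmint.mul_const U) hmono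
    calc Geps g ρ ε x ≤ ∫ y : Fin 4 → ℝ, moll ρ ε y * U := this
    _ = (∫ y : Fin 4 → ℝ, moll ρ ε y) * U := integral_mul_const U _
    _ = U := by rw [hm1, one_mul]
  have hlower : L ≤ Geps g ρ ε x := by
    have hmono : ∀ᵐ y : Fin 4 → ℝ, moll ρ ε y * L ≤ moll ρ ε y * g (x - y) := by
      filter_upwards [hae] with y hy
      by_cases hm : moll ρ ε y = 0
      · rw [hm, zero_mul, zero_mul]
      · exact mul_le_mul_of_nonneg_left ((hkey y hy hm).1) (hmnn y)
    have := integral_mono_ae (hmint.mul_const L) hFint hmono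
    calc L = (∫ y : Fin 4 → ℝ, moll ρ ε y) * L := by rw [hm1, one_mul]
    _ = ∫ y : Fin 4 → ℝ, moll ρ ε y * L := (integral_mul_const L _).symm
    _ ≤ Geps g ρ ε x := this
  exact ⟨hlower, hupper⟩

end
end
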